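/- Let B_j(λ) be a unitary on j qubits such that B_j(λ)|0⟩|1⟩^{⊗(j-1)} = (|0⟩|1⟩^{⊗(j-1)} + e^{-iλ}|1⟩|0⟩^{⊗(j-1)})/√2 and B_j(λ)|1⟩|1⟩^{⊗(j-1)} = (|0⟩|1⟩^{⊗(j-1)} − e^{-iλ}|1⟩|0⟩^{⊗(j-1)})/√2. Then exp(iγτ(e^{iλ} s_j^- + e^{-iλ} s_j^+)) restricted to the last j qubit factors equals B_j(λ) · CRZ_j^{1,...,j-1}(−2γτ) · B_j(λ)†, where CRZ is the multi-controlled RZ gate exp(−iθ Z_j/2) ⊗ |1⟩⟨1|^{⊗(j-1)} + I ⊗ (I^{⊗(j-1)} − |1⟩⟨1|^{⊗(j-1)}) with θ = −2γτ. -/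

import Mathlib

open Matrix Complex
open scoped Matrix.Norms.L2Operator Kronecker

noncomputable section

/-- Kronecker product realized on `Fin (a*b)`, first factor most significant. -/
def kron {a b : ℕ} (A : Matrix (Fin a) (Fin a) ℂ) (B : Matrix (Fin b) (Fin b) ℂ) :
    Matrix (Fin (a * b)) (Fin (a * b)) ℂ :=
  Matrix.reindex finProdFinEquiv finProdFinEquiv (Matrix.kroneckerMap (· * ·) A B)

def castM {a b : ℕ} (h : a = b) (A : Matrix (Fin a) (Fin a) ℂ) : Matrix (Fin b) (Fin b) ℂ :=
  Matrix.reindex (finCongr h) (finCongr h) A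

def tpow (A : Matrix (Fin 2) (Fin 2) ℂ) : (k : ℕ) → Matrix (Fin (2 ^ k)) (Fin (2 ^ k)) ℂ
  | 0 => 1
  | k + 1 => castM (pow_succ' 2 k).symm (kron A (tpow A k))

/-- `σ01 = |0⟩⟨1|`. -/
def sig01 : Matrix (Fin 2) (Fin 2) ℂ := Matrix.single 0 1 1

/-- `σ10 = |1⟩⟨0|`. -/
def sig10 : Matrix (Fin 2) (Fin 2) ℂ := Matrix.single 1 0 1

lemma sterm_size (n : ℕ) (j : Fin n) : 2 ^ (n - (j.1 + 1)) * (2 * 2 ^ j.1) = 2 ^ n := by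
  rw [← pow_succ', ← pow_add]
  congr 1
  have hj := j.2
  omega

/-- `s_j^- = I^{⊗(n-j)} ⊗ σ01 ⊗ σ10^{⊗(j-1)}` on `n` qubits (paper index `j.1 + 1`). -/
def sTerm (n : ℕ) (j : Fin n) : Matrix (Fin (2 ^ n)) (Fin (2 ^ n)) ℂ :=
  castM (sterm_size n j) (kron (tpow 1 (n - (j.1 + 1))) (kron sig01 (tpow sig10 j.1)))

lemma idx_b (j : ℕ) (hj : 1 ≤ j) : 2 ^ (j - 1) < 2 ^ j :=
  Nat.pow_lt_pow_right one_lt_two (by omega)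

lemma idx_a (j : ℕ) (hj : 1 ≤ j) : 2 ^ (j - 1) - 1 < 2 ^ j :=
  lt_of_le_of_lt (Nat.sub_le _ _) (idx_b j hj)

lemma idx_c (j : ℕ) : 2 ^ j - 1 < 2 ^ j := by
  have h : 0 < 2 ^ j := by positivity
  omega

lemma split_size (j : ℕ) (hj : 1 ≤ j) : 2 * 2 ^ (j - 1) = 2 ^ j := by
  rw [← pow_succ']
  congr 1
  omega

/-- `s_j^- = σ01 ⊗ σ10^{⊗(j-1)}` on `j` qubits. -/
def sjm (j : ℕ) (hj : 1 ≤ j) : Matrix (Fin (2 ^ j)) (Fin (2 ^ j)) ℂ :=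
  castM (split_size j hj) (kron sig01 (tpow sig10 (j - 1)))

/-- Pauli `Z`. -/
def Zmat : Matrix (Fin 2) (Fin 2) ℂ := !![1, 0; 0, (-1 : ℂ)]

/-- `RZ(θ) = exp(−iθZ/2)`. -/
def RZ (θ : ℝ) : Matrix (Fin 2) (Fin 2) ℂ :=
  NormedSpace.exp ((-(θ / 2 : ℂ) * Complex.I) • Zmat)

/-- `|1⟩⟨1|^{⊗k}`. -/
def projOnes (k : ℕ) : Matrix (Fin (2 ^ k)) (Fin (2 ^ k)) ℂ :=
  tpow (Matrix.single 1 1 1) k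

/-- Multi-controlled RZ gate
`exp(−iθZ/2) ⊗ |1⟩⟨1|^{⊗(j-1)} + I ⊗ (I^{⊗(j-1)} − |1⟩⟨1|^{⊗(j-1)})` on `j` qubits. -/
def CRZ (j : ℕ) (hj : 1 ≤ j) (θ : ℝ) : Matrix (Fin (2 ^ j)) (Fin (2 ^ j)) ℂ :=
  castM (split_size j hj)
    (kron (RZ θ) (projOnes (j - 1)) + kron 1 (tpow 1 (j - 1) - projOnes (j - 1)))

/-!
Write `a = |01…1⟩`, `b = |10…0⟩`, `c = |1…1⟩`, `β = e^{-iλ}`. Then `s_j^- = |a⟩⟨b|`, and for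
`v = (|a⟩ + β|b⟩)/√2`, `w = (|a⟩ - β|b⟩)/√2` the generator `e^{iλ} s_j^- + e^{-iλ} s_j^+`
equals `P - Q` with `P = |v⟩⟨v|`, `Q = |w⟩⟨w|`. Since `v = B|a⟩` and `w = B|c⟩` are orthonormal,
`P` and `Q` are orthogonal projections, so `exp(t(P - Q)) = 1 + (e^t - 1)P + (e^{-t} - 1)Q`, which is
`B (1 + (e^t - 1)|a⟩⟨a| + (e^{-t} - 1)|c⟩⟨c|) B†`; the middle factor is the controlled `RZ` gate,
which only acts on the two basis states `a` and `c`.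
-/

section Exponential

variable {𝔸 : Type*} [NormedRing 𝔸] [NormedAlgebra ℂ 𝔸] [CompleteSpace 𝔸]

theorem IsIdempotentElem.exp_smul {p : 𝔸} (hp : IsIdempotentElem p) (c : ℂ) :
    NormedSpace.exp (c • p) = 1 + (Complex.exp c - 1) • p := by
  have hterm : ∀ n : ℕ, ((n.factorial : ℂ)⁻¹ • c ^ n) • p +
      (if n = 0 then 1 - p else 0) = ((n.factorial : ℂ)⁻¹ : ℂ) • (c • p) ^ n := by
    rintro (_ | n)
    · simp
    · simp [smul_pow, hp.pow_succ_eq, smul_smul]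
  have hsum := ((NormedSpace.exp_series_hasSum_exp' (𝕂 := ℂ) c).smul_const p).add
    (hasSum_ite_eq 0 (1 - p))
  rw [funext hterm, ← Complex.exp_eq_exp_ℂ] at hsum
  rw [(NormedSpace.exp_series_hasSum_exp' (𝕂 := ℂ) (c • p)).unique hsum, sub_smul, one_smul]
  abel

theorem exp_smul_add_smul_of_mul_eq_zero {p q : 𝔸} (hp : IsIdempotentElem p)
    (hq : IsIdempotentElem q) (hpq : p * q = 0) (hqp : q * p = 0) (c d : ℂ) :
    NormedSpace.exp (c • p + d • q) = 1 + (Complex.exp c - 1) • p + (Complex.exp d - 1) • q := by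
  have hcomm : Commute (c • p) (d • q) := by
    simp [Commute, SemiconjBy, hpq, hqp]
  let _ : NormedAlgebra ℚ 𝔸 := NormedAlgebra.restrictScalars ℚ ℂ 𝔸
  rw [NormedSpace.exp_add_of_commute hcomm, hp.exp_smul, hq.exp_smul]
  simp [add_mul, mul_add, hpq]

end Exponential

theorem isIdempotentElem_vecMulVec {n R : Type*} [Fintype n] [Semiring R] {u v : n → R}
    (h : v ⬝ᵥ u = 1) : IsIdempotentElem (vecMulVec u v) := by
  rw [IsIdempotentElem, vecMulVec_mul_vecMulVec, h, one_smul]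

theorem vecMulVec_mul_vecMulVec_eq_zero {n R : Type*} [Fintype n] [Semiring R] {u v w x : n → R}
    (h : v ⬝ᵥ w = 0) : vecMulVec u v * vecMulVec w x = 0 := by
  rw [vecMulVec_mul_vecMulVec, h, zero_smul]
  ext; simp [vecMulVec_apply]

section Kronecker

variable {a b : ℕ}

@[simp]
theorem castM_one (h : a = b) : castM h (1 : Matrix (Fin a) (Fin a) ℂ) = 1 := by
  simp [castM]

@[simp]
theorem castM_single (h : a = b) (i k : Fin a) (c : ℂ) :
    castM h (single i k c) = single (finCongr h i) (finCongr h k) c := by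
  simp [castM]

theorem castM_add (h : a = b) (A B : Matrix (Fin a) (Fin a) ℂ) :
    castM h (A + B) = castM h A + castM h B := rfl

theorem castM_sub (h : a = b) (A B : Matrix (Fin a) (Fin a) ℂ) :
    castM h (A - B) = castM h A - castM h B := rfl

theorem castM_smul (h : a = b) (c : ℂ) (A : Matrix (Fin a) (Fin a) ℂ) :
    castM h (c • A) = c • castM h A := rfl

theorem kron_add_left (A B : Matrix (Fin a) (Fin a) ℂ) (C : Matrix (Fin b) (Fin b) ℂ) :
    kron (A + B) C = kron A C + kron B C := by
  ext; simp [kron, add_mul]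

theorem kron_sub_right (A : Matrix (Fin a) (Fin a) ℂ) (B C : Matrix (Fin b) (Fin b) ℂ) :
    kron A (B - C) = kron A B - kron A C := by
  ext; simp [kron, mul_sub]

theorem kron_smul_left (c : ℂ) (A : Matrix (Fin a) (Fin a) ℂ) (B : Matrix (Fin b) (Fin b) ℂ) :
    kron (c • A) B = c • kron A B := by
  ext; simp [kron, mul_assoc]

@[simp]
theorem kron_one_one : kron (1 : Matrix (Fin a) (Fin a) ℂ) (1 : Matrix (Fin b) (Fin b) ℂ) = 1 := by
  change reindex _ _ ((1 : Matrix (Fin a) (Fin a) ℂ) ⊗ₖ (1 : Matrix (Fin b) (Fin b) ℂ)) = 1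
  simp

@[simp]
theorem kron_single_single (i k : Fin a) (i' k' : Fin b) (c d : ℂ) :
    kron (single i k c) (single i' k' d) =
      single (finProdFinEquiv (i, i')) (finProdFinEquiv (k, k')) (c * d) := by
  change reindex _ _ (single i k c ⊗ₖ single i' k' d) = _
  simp [single_kronecker_single]

end Kronecker

theorem tpow_one (k : ℕ) : tpow 1 k = 1 := by
  induction k with
  | zero => rfl
  | succ k ih => simp [tpow, ih]

theorem mul_two_pow_sub_one_lt (i : Fin 2) (k : ℕ) : i.val * (2 ^ k - 1) < 2 ^ k := by
  fin_cases i <;> simp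

/-- `i * (2 ^ n - 1)` is the index of the basis state `|i⟩^{⊗n}`. -/
theorem tpow_single (i k : Fin 2) (n : ℕ) :
    tpow (single i k 1) n = single ⟨i * (2 ^ n - 1), mul_two_pow_sub_one_lt i n⟩
      ⟨k * (2 ^ n - 1), mul_two_pow_sub_one_lt k n⟩ 1 := by
  induction n with
  | zero =>
    ext p q
    obtain rfl : p = 0 := Fin.fin_one_eq_zero p
    obtain rfl : q = 0 := Fin.fin_one_eq_zero q
    rfl
  | succ n ih =>
    rw [tpow, ih, kron_single_single, castM_single, mul_one]
    have : 0 < 2 ^ n := by positivity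
    congr 1 <;> ext <;> fin_cases i <;> fin_cases k <;> simp [pow_succ] <;> omega

theorem sjm_eq (j : ℕ) (hj : 1 ≤ j) :
    sjm j hj = single ⟨2 ^ (j - 1) - 1, idx_a j hj⟩ ⟨2 ^ (j - 1), idx_b j hj⟩ 1 := by
  rw [sjm, sig01, sig10, tpow_single, kron_single_single, castM_single, mul_one]
  congr 1 <;> ext <;> simp

theorem RZ_eq (θ : ℝ) :
    RZ θ = Complex.exp (-(θ / 2 : ℂ) * Complex.I) • single 0 0 1 +
      Complex.exp (-(-(θ / 2 : ℂ) * Complex.I)) • single 1 1 1 := by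
  have hZ : Zmat = diagonal ![1, -1] := by
    ext p q; fin_cases p <;> fin_cases q <;> rfl
  rw [RZ, hZ, ← diagonal_smul, exp_diagonal]
  ext p q
  fin_cases p <;> fin_cases q <;> simp [Complex.exp_eq_exp_ℂ]

theorem projOnes_eq (k : ℕ) :
    projOnes k = single ⟨2 ^ k - 1, idx_c k⟩ ⟨2 ^ k - 1, idx_c k⟩ 1 := by
  rw [projOnes, tpow_single]
  congr 1 <;> ext <;> simp

theorem CRZ_eq (j : ℕ) (hj : 1 ≤ j) (θ : ℝ) :
    CRZ j hj θ = 1 +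
      (Complex.exp (-(θ / 2 : ℂ) * Complex.I) - 1) •
        single ⟨2 ^ (j - 1) - 1, idx_a j hj⟩ ⟨2 ^ (j - 1) - 1, idx_a j hj⟩ 1 +
      (Complex.exp (-(-(θ / 2 : ℂ) * Complex.I)) - 1) •
        single ⟨2 ^ j - 1, idx_c j⟩ ⟨2 ^ j - 1, idx_c j⟩ 1 := by
  have hone : (1 : Matrix (Fin 2) (Fin 2) ℂ) = single 0 0 1 + single 1 1 1 := by
    ext p q; fin_cases p <;> fin_cases q <;> simp [one_apply]
  have h0 : finCongr (split_size j hj) (finProdFinEquiv (0, ⟨2 ^ (j - 1) - 1, idx_c (j - 1)⟩)) =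
      ⟨2 ^ (j - 1) - 1, idx_a j hj⟩ := by
    ext; simp
  have h1 : finCongr (split_size j hj) (finProdFinEquiv (1, ⟨2 ^ (j - 1) - 1, idx_c (j - 1)⟩)) =
      ⟨2 ^ j - 1, idx_c j⟩ := by
    have := split_size j hj
    have : 0 < 2 ^ (j - 1) := by positivity
    ext; simp; omega
  rw [CRZ, RZ_eq, projOnes_eq, tpow_one, kron_sub_right, kron_one_one, hone,
    kron_add_left, kron_add_left, kron_smul_left, kron_smul_left]
  simp only [castM_add, castM_sub, castM_smul, castM_one, kron_single_single, castM_single,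
    mul_one, h0, h1]
  module

section Vectors

variable {n R : Type*} [Fintype n] [DecidableEq n]

theorem mul_single_mul_conjTranspose [Semiring R] [StarRing R] (B : Matrix n n R) (i : n) :
    B * single i i 1 * Bᴴ = vecMulVec (B *ᵥ Pi.single i 1) (star (B *ᵥ Pi.single i 1)) := by
  rw [single_eq_single_vecMulVec_single, mul_vecMulVec, vecMulVec_mul, star_mulVec,
    ← Pi.single_star, star_one]

theorem UnitaryGroup.star_mulVec_dotProduct_mulVec [CommRing R] [StarRing R] {B : Matrix n n R}
    (hB : B ∈ unitaryGroup n R) (x y : n → R) :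
    star (B *ᵥ x) ⬝ᵥ (B *ᵥ y) = star x ⬝ᵥ y := by
  rw [star_mulVec, ← dotProduct_mulVec, mulVec_mulVec, ← star_eq_conjTranspose,
    Unitary.star_mul_self_of_mem hB, one_mulVec]

end Vectors

theorem vecMulVec_sub_vecMulVec_of_add_sub {n R : Type*} [CommRing R] [StarRing R] (s : R)
    (x y : n → R) :
    vecMulVec (s • (x + y)) (star (s • (x + y))) - vecMulVec (s • (x - y)) (star (s • (x - y))) =
      (2 * s * star s) • (vecMulVec x (star y) + vecMulVec y (star x)) := by
  ext p q
  simp [vecMulVec_apply]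
  ring

theorem UnitaryGroup.exp_smul_vecMulVec_columns_sub {n : Type*} [Fintype n] [DecidableEq n]
    {B : Matrix n n ℂ} (hB : B ∈ unitaryGroup n ℂ) {i k : n} (hik : i ≠ k) (c : ℂ) :
    NormedSpace.exp (c • (vecMulVec (B *ᵥ Pi.single i 1) (star (B *ᵥ Pi.single i 1)) -
        vecMulVec (B *ᵥ Pi.single k 1) (star (B *ᵥ Pi.single k 1)))) =
      B * (1 + (Complex.exp c - 1) • single i i 1 + (Complex.exp (-c) - 1) • single k k 1) *
        Bᴴ := by
  have hdot := UnitaryGroup.star_mulVec_dotProduct_mulVec hB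
  have hBB : B * Bᴴ = 1 := by
    rw [← star_eq_conjTranspose, Unitary.mul_star_self_of_mem hB]
  rw [smul_sub, sub_eq_add_neg, ← neg_smul,
    exp_smul_add_smul_of_mul_eq_zero (isIdempotentElem_vecMulVec (by rw [hdot]; simp))
      (isIdempotentElem_vecMulVec (by rw [hdot]; simp))
      (vecMulVec_mul_vecMulVec_eq_zero (by rw [hdot]; simp [hik]))
      (vecMulVec_mul_vecMulVec_eq_zero (by rw [hdot]; simp [hik.symm]))]
  simp only [mul_add, add_mul, mul_smul_comm, smul_mul_assoc, mul_one, hBB,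
    mul_single_mul_conjTranspose]

theorem star_smul_single_add_smul_single_eq_vecMulVec_sub {n : Type*} [Fintype n]
    [DecidableEq n] (a b : n) (β : ℂ) :
    star β • single a b (1 : ℂ) + β • single b a 1 =
      vecMulVec ((Real.sqrt 2 : ℂ)⁻¹ • (Pi.single a 1 + β • Pi.single b 1))
          (star ((Real.sqrt 2 : ℂ)⁻¹ • (Pi.single a 1 + β • Pi.single b 1))) -
        vecMulVec ((Real.sqrt 2 : ℂ)⁻¹ • (Pi.single a 1 - β • Pi.single b 1))
          (star ((Real.sqrt 2 : ℂ)⁻¹ • (Pi.single a 1 - β • Pi.single b 1))) := by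
  have hs : 2 * (Real.sqrt 2 : ℂ)⁻¹ * star (Real.sqrt 2 : ℂ)⁻¹ = 1 := by
    rw [star_inv₀, Complex.star_def, Complex.conj_ofReal, mul_assoc, ← mul_inv,
      ← Complex.ofReal_mul, Real.mul_self_sqrt zero_le_two]
    norm_num
  rw [vecMulVec_sub_vecMulVec_of_add_sub, hs, one_smul, star_smul]
  simp only [← Pi.single_star, star_one, vecMulVec_smul, smul_vecMulVec,
    ← single_eq_single_vecMulVec_single]

/-- Bell-basis conjugation identity:
`exp(iγτ(e^{iλ} s_j^- + e^{-iλ} s_j^+)) = B_j(λ) CRZ_j(−2γτ) B_j(λ)†`. -/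
theorem stmt_7 (j : ℕ) (hj : 1 ≤ j) (γ lam τ : ℝ)
    (B : Matrix (Fin (2 ^ j)) (Fin (2 ^ j)) ℂ)
    (hB : B ∈ Matrix.unitaryGroup (Fin (2 ^ j)) ℂ)
    (hB0 : B.mulVec ((Pi.single (⟨2 ^ (j - 1) - 1, idx_a j hj⟩ : Fin (2 ^ j)) 1 : Fin (2 ^ j) → ℂ)) =
      ((Real.sqrt 2 : ℂ))⁻¹ • ((Pi.single (⟨2 ^ (j - 1) - 1, idx_a j hj⟩ : Fin (2 ^ j)) 1 : Fin (2 ^ j) → ℂ) +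
        Complex.exp (-(Complex.I * lam)) • (Pi.single (⟨2 ^ (j - 1), idx_b j hj⟩ : Fin (2 ^ j)) 1 : Fin (2 ^ j) → ℂ)))
    (hB1 : B.mulVec ((Pi.single (⟨2 ^ j - 1, idx_c j⟩ : Fin (2 ^ j)) 1 : Fin (2 ^ j) → ℂ)) =
      ((Real.sqrt 2 : ℂ))⁻¹ • ((Pi.single (⟨2 ^ (j - 1) - 1, idx_a j hj⟩ : Fin (2 ^ j)) 1 : Fin (2 ^ j) → ℂ) -
        Complex.exp (-(Complex.I * lam)) • (Pi.single (⟨2 ^ (j - 1), idx_b j hj⟩ : Fin (2 ^ j)) 1 : Fin (2 ^ j) → ℂ))) :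
    NormedSpace.exp ((Complex.I * (γ * τ)) •
        (Complex.exp (Complex.I * lam) • sjm j hj +
          Complex.exp (-(Complex.I * lam)) • (sjm j hj)ᴴ)) =
      B * CRZ j hj (-(2 * γ * τ)) * Bᴴ := by
  have hac : (⟨2 ^ (j - 1) - 1, idx_a j hj⟩ : Fin (2 ^ j)) ≠ ⟨2 ^ j - 1, idx_c j⟩ := by
    have := split_size j hj
    have : 0 < 2 ^ (j - 1) := by positivity
    simp only [ne_eq, Fin.mk.injEq]
    omega
  have hβ : Complex.exp (Complex.I * lam) = star (Complex.exp (-(Complex.I * lam))) := by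
    rw [Complex.star_def, ← Complex.exp_conj]
    simp
  have hθ : -(((-(2 * γ * τ) : ℝ) : ℂ) / 2) * Complex.I = Complex.I * (γ * τ) := by
    push_cast; ring
  rw [sjm_eq, conjTranspose_single, star_one, hβ,
    star_smul_single_add_smul_single_eq_vecMulVec_sub, ← hB0, ← hB1,
    UnitaryGroup.exp_smul_vecMulVec_columns_sub hB hac, CRZ_eq, hθ]
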